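/- arXiv:1101.3630 — 6 statements merged into one kernel-verified Lean document; each statement's English description precedes it below -/
import Mathlib

section
/- Let C be the Hessian cubic X³+Y³+Z³-3aXYZ = 0 over a field k of characteristic not 2 or 3. For every point (X₀:Y₀:Z₀) on C, the point (X₀²-aY₀Z₀, Y₀²-aX₀Z₀, Z₀²-aX₀Y₀) satisfies the sextic equation G(U,V,W) = U⁶+V⁶+W⁶ - 6a²(U⁴VW+UV⁴W+UVW⁴) + (4a³-2)(U³V³+U³W³+V³W³) + (12a-3a⁴)U²V²W² = 0. That is, G(X²-aYZ, Y²-aXZ, Z²-aXY) is divisible by X³+Y³+Z³-3aXYZ as a polynomial in k[a][X,Y,Z]. -/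
open MvPolynomial

/-! Composed with the Gauss map, the sextic becomes a polynomial in `a`, `s = x³ + y³ + z³`,
`p = xyz` and `q = x³y³ + y³z³ + z³x³`. Dividing it by `F = s - 3ap` as a polynomial in `s`
leaves remainder zero, and the quotient, divided by `F` once more, leaves remainder
`8(1 - a³)³p³`. -/

section Hessian

variable {R : Type*} [CommRing R]

def hessianCubic (a x y z : R) : R := x ^ 3 + y ^ 3 + z ^ 3 - 3 * a * x * y * z

def hessianDual (a U V W : R) : R :=
  U ^ 6 + V ^ 6 + W ^ 6
    - 6 * a ^ 2 * (U ^ 4 * V * W + U * V ^ 4 * W + U * V * W ^ 4)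
    + (4 * a ^ 3 - 2) * (U ^ 3 * V ^ 3 + U ^ 3 * W ^ 3 + V ^ 3 * W ^ 3)
    + (12 * a - 3 * a ^ 4) * U ^ 2 * V ^ 2 * W ^ 2

theorem hessianDual_comp_gauss (a x y z : R) :
    hessianDual a (x ^ 2 - a * y * z) (y ^ 2 - a * x * z) (z ^ 2 - a * x * y) =
      hessianCubic a x y z * (hessianCubic a x y z *
          ((x ^ 3 + y ^ 3 + z ^ 3) ^ 2 - 6 * a ^ 4 * (x * y * z) * (x ^ 3 + y ^ 3 + z ^ 3)
            - 4 * (1 - a ^ 3) ^ 2 * (x ^ 3 * y ^ 3 + y ^ 3 * z ^ 3 + z ^ 3 * x ^ 3)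
            - 3 * a ^ 2 * (4 - 8 * a ^ 3 + a ^ 6) * (x * y * z) ^ 2)
        + 8 * (1 - a ^ 3) ^ 3 * (x * y * z) ^ 3) := by
  unfold hessianDual hessianCubic
  ring

theorem hessianCubic_dvd_hessianDual_comp_gauss (a x y z : R) :
    hessianCubic a x y z ∣
      hessianDual a (x ^ 2 - a * y * z) (y ^ 2 - a * x * z) (z ^ 2 - a * x * y) :=
  Dvd.intro _ (hessianDual_comp_gauss a x y z).symm

theorem hessianDual_comp_gauss_eq_zero {a x y z : R} (h : hessianCubic a x y z = 0) :
    hessianDual a (x ^ 2 - a * y * z) (y ^ 2 - a * x * z) (z ^ 2 - a * x * y) = 0 := by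
  rw [hessianDual_comp_gauss, h, zero_mul]

end Hessian

theorem gauss_image_on_dual_sextic_general {k : Type*} [Field k] :
    (∀ a x y z : k, x ^ 3 + y ^ 3 + z ^ 3 - 3 * a * x * y * z = 0 →
      (fun U V W : k =>
        U ^ 6 + V ^ 6 + W ^ 6
          - 6 * a ^ 2 * (U ^ 4 * V * W + U * V ^ 4 * W + U * V * W ^ 4)
          + (4 * a ^ 3 - 2) * (U ^ 3 * V ^ 3 + U ^ 3 * W ^ 3 + V ^ 3 * W ^ 3)
          + (12 * a - 3 * a ^ 4) * U ^ 2 * V ^ 2 * W ^ 2)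
        (x ^ 2 - a * y * z) (y ^ 2 - a * x * z) (z ^ 2 - a * x * y) = 0) ∧
    (∀ a x y z U V W : MvPolynomial (Fin 4) k,
      a = X 0 → x = X 1 → y = X 2 → z = X 3 →
      U = x ^ 2 - a * y * z → V = y ^ 2 - a * x * z → W = z ^ 2 - a * x * y →
      (x ^ 3 + y ^ 3 + z ^ 3 - 3 * a * x * y * z) ∣
        (U ^ 6 + V ^ 6 + W ^ 6
          - 6 * a ^ 2 * (U ^ 4 * V * W + U * V ^ 4 * W + U * V * W ^ 4)
          + (4 * a ^ 3 - 2) * (U ^ 3 * V ^ 3 + U ^ 3 * W ^ 3 + V ^ 3 * W ^ 3)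
          + (12 * a - 3 * a ^ 4) * U ^ 2 * V ^ 2 * W ^ 2)) := by
  refine ⟨fun a x y z h => hessianDual_comp_gauss_eq_zero h, ?_⟩
  rintro a x y z U V W - - - - rfl rfl rfl
  exact hessianCubic_dvd_hessianDual_comp_gauss a x y z

/-- Every point of the Hessian cubic `X³+Y³+Z³-3aXYZ = 0` is mapped by the Gauss map
`(X:Y:Z) ↦ (X²-aYZ : Y²-aXZ : Z²-aXY)` onto the sextic dual curve `G(U,V,W) = 0`;
equivalently `G(X²-aYZ, Y²-aXZ, Z²-aXY)` is divisible by `X³+Y³+Z³-3aXYZ`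
as a polynomial in the four variables `a, X, Y, Z`. -/
theorem gauss_image_on_dual_sextic {k : Type*} [Field k]
    (h2 : (2 : k) ≠ 0) (h3 : (3 : k) ≠ 0) :
    (∀ a x y z : k, x ^ 3 + y ^ 3 + z ^ 3 - 3 * a * x * y * z = 0 →
      (fun U V W : k =>
        U ^ 6 + V ^ 6 + W ^ 6
          - 6 * a ^ 2 * (U ^ 4 * V * W + U * V ^ 4 * W + U * V * W ^ 4)
          + (4 * a ^ 3 - 2) * (U ^ 3 * V ^ 3 + U ^ 3 * W ^ 3 + V ^ 3 * W ^ 3)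
          + (12 * a - 3 * a ^ 4) * U ^ 2 * V ^ 2 * W ^ 2)
        (x ^ 2 - a * y * z) (y ^ 2 - a * x * z) (z ^ 2 - a * x * y) = 0) ∧
    (∀ a x y z U V W : MvPolynomial (Fin 4) k,
      a = X 0 → x = X 1 → y = X 2 → z = X 3 →
      U = x ^ 2 - a * y * z → V = y ^ 2 - a * x * z → W = z ^ 2 - a * x * y →
      (x ^ 3 + y ^ 3 + z ^ 3 - 3 * a * x * y * z) ∣
        (U ^ 6 + V ^ 6 + W ^ 6
          - 6 * a ^ 2 * (U ^ 4 * V * W + U * V ^ 4 * W + U * V * W ^ 4)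
          + (4 * a ^ 3 - 2) * (U ^ 3 * V ^ 3 + U ^ 3 * W ^ 3 + V ^ 3 * W ^ 3)
          + (12 * a - 3 * a ^ 4) * U ^ 2 * V ^ 2 * W ^ 2)) :=
  gauss_image_on_dual_sextic_general
end

section
/- The six points (a:1:1), (1:a:1), (1:1:a), (ζ₃²:ζ₃:a), (ζ₃:a:ζ₃²), (a:ζ₃²:ζ₃) all lie on the conic U² + ζ₃V² + ζ₃²W² + (a+1)(ζ₃²UV + ζ₃UW + VW) = 0. -/
/-! Cyclically rotating the coordinates multiplies the quadratic form of the conic by `ζ²`, so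
its zero set is rotation invariant. The six points form two rotation orbits, of `(a:1:1)` and
of `(ζ²:ζ:a)`, and it suffices to check these two. -/

section CuspConic

variable {R : Type*} [CommRing R] {ζ : R}

def cuspConic (ζ a U V W : R) : R :=
  U ^ 2 + ζ * V ^ 2 + ζ ^ 2 * W ^ 2 + (a + 1) * (ζ ^ 2 * (U * V) + ζ * (U * W) + V * W)

theorem cuspConic_rotate (hζ : ζ ^ 2 + ζ + 1 = 0) (a U V W : R) :
    cuspConic ζ a V W U = ζ ^ 2 * cuspConic ζ a U V W := by
  have hζ3 : ζ ^ 3 = 1 := by linear_combination (ζ - 1) * hζ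
  unfold cuspConic
  linear_combination -(V ^ 2 + ζ * W ^ 2 + (a + 1) * (ζ * (U * V) + U * W)) * hζ3

theorem cuspConic_rotate_eq_zero (hζ : ζ ^ 2 + ζ + 1 = 0) {a U V W : R}
    (h : cuspConic ζ a U V W = 0) : cuspConic ζ a V W U = 0 := by
  rw [cuspConic_rotate hζ, h, mul_zero]

theorem cuspConic_param_one_one (hζ : ζ ^ 2 + ζ + 1 = 0) (a : R) : cuspConic ζ a a 1 1 = 0 := by
  unfold cuspConic
  linear_combination (a ^ 2 + a + 1) * hζ

theorem cuspConic_sq_self_param (hζ : ζ ^ 2 + ζ + 1 = 0) (a : R) :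
    cuspConic ζ a (ζ ^ 2) ζ a = 0 := by
  have hζ3 : ζ ^ 3 = 1 := by linear_combination (ζ - 1) * hζ
  unfold cuspConic
  linear_combination (a ^ 2 + a + 1) * hζ + (ζ + 1 + (a + 1) * (ζ ^ 2 + a)) * hζ3

end CuspConic

theorem six_cusps_on_conic_three_general {k : Type*} [Field k]
    (ζ : k) (hζ : ζ ^ 2 + ζ + 1 = 0) (a : k)
    (P : k → k → k → Prop)
    (hP : ∀ U V W, P U V W ↔
      U ^ 2 + ζ * V ^ 2 + ζ ^ 2 * W ^ 2
        + (a + 1) * (ζ ^ 2 * (U * V) + ζ * (U * W) + V * W) = 0) :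
    P a 1 1 ∧ P 1 a 1 ∧ P 1 1 a ∧
    P (ζ ^ 2) ζ a ∧ P ζ a (ζ ^ 2) ∧ P a (ζ ^ 2) ζ := by
  have hP : ∀ U V W, P U V W ↔ cuspConic ζ a U V W = 0 := hP
  simp only [hP]
  have h₁ := cuspConic_param_one_one hζ a
  have h₂ := cuspConic_rotate_eq_zero hζ h₁
  have h₃ := cuspConic_rotate_eq_zero hζ h₂
  have h₄ := cuspConic_sq_self_param hζ a
  have h₅ := cuspConic_rotate_eq_zero hζ h₄
  exact ⟨h₁, h₃, h₂, h₄, h₅, cuspConic_rotate_eq_zero hζ h₅⟩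

/-- The six cusps `(a:1:1)`, `(1:a:1)`, `(1:1:a)`, `(ζ₃²:ζ₃:a)`, `(ζ₃:a:ζ₃²)`,
`(a:ζ₃²:ζ₃)` lie on the conic `U²+ζ₃V²+ζ₃²W²+(a+1)(ζ₃²UV+ζ₃UW+VW) = 0`. -/
theorem six_cusps_on_conic_three {k : Type*} [Field k]
    (h2 : (2 : k) ≠ 0) (h3 : (3 : k) ≠ 0)
    (ζ : k) (hζ : ζ ^ 2 + ζ + 1 = 0) (a : k)
    (P : k → k → k → Prop)
    (hP : ∀ U V W, P U V W ↔
      U ^ 2 + ζ * V ^ 2 + ζ ^ 2 * W ^ 2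
        + (a + 1) * (ζ ^ 2 * (U * V) + ζ * (U * W) + V * W) = 0) :
    P a 1 1 ∧ P 1 a 1 ∧ P 1 1 a ∧
    P (ζ ^ 2) ζ a ∧ P ζ a (ζ ^ 2) ∧ P a (ζ ^ 2) ζ :=
  six_cusps_on_conic_three_general ζ hζ a P hP
end

section
/- Let k be a field of characteristic not 2 or 3 and let a ∈ k. Substituting U(t) = a²t⁴-2at³+(a³+2)t²-2a²t+a, V(t) = a⁴t⁴+(1-3a³)t³+3a²t²-2at+1, W(t) = at⁴-(a³+1)t³+3a²t²-2at+1 into G(U,V,W) = U⁶+V⁶+W⁶ - 6a²(U⁴VW+UV⁴W+UVW⁴) + (4a³-2)(U³V³+U³W³+V³W³) + (12a-3a⁴)U²V²W² gives t⁶(t+1)²(t²-t+1)²(at-2)²((a+1)t-1)²((a²-a+1)t²+(1-2a)t+1)²(a²t²+1-at)², up to multiplication by a nonzero constant; in particular G(U(t),V(t),W(t)) is a square in k(a)(t) (being t⁶ times a perfect square of a polynomial). -/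
open Polynomial

/-!
Over any commutative ring, `G(U, V, W)` is exactly `(a³ - 1)⁴` times the stated product, and that
product is the square of `t³(t+1)(t²-t+1)(at-2)((a+1)t-1)((a²-a+1)t²+(1-2a)t+1)(a²t²+1-at)`.
The constant `(a³ - 1)⁴` is nonzero in `k[a]` in every characteristic.
-/

section QuarticIdentity

variable {R : Type*} [CommRing R]

def dualHessian (a U V W : R) : R :=
  U ^ 6 + V ^ 6 + W ^ 6
    - 6 * a ^ 2 * (U ^ 4 * V * W + U * V ^ 4 * W + U * V * W ^ 4)
    + (4 * a ^ 3 - 2) * (U ^ 3 * V ^ 3 + U ^ 3 * W ^ 3 + V ^ 3 * W ^ 3)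
    + (12 * a - 3 * a ^ 4) * U ^ 2 * V ^ 2 * W ^ 2

def quarticU (a t : R) : R :=
  a ^ 2 * t ^ 4 - 2 * a * t ^ 3 + (a ^ 3 + 2) * t ^ 2 - 2 * a ^ 2 * t + a

def quarticV (a t : R) : R :=
  a ^ 4 * t ^ 4 + (1 - 3 * a ^ 3) * t ^ 3 + 3 * a ^ 2 * t ^ 2 - 2 * a * t + 1

def quarticW (a t : R) : R :=
  a * t ^ 4 - (a ^ 3 + 1) * t ^ 3 + 3 * a ^ 2 * t ^ 2 - 2 * a * t + 1

def quarticContact (a t : R) : R :=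
  t ^ 3 * (t + 1) * (t ^ 2 - t + 1) * (a * t - 2) * ((a + 1) * t - 1)
    * ((a ^ 2 - a + 1) * t ^ 2 + (1 - 2 * a) * t + 1) * (a ^ 2 * t ^ 2 + 1 - a * t)

set_option maxHeartbeats 1000000 in
theorem dualHessian_quartic (a t : R) :
    dualHessian a (quarticU a t) (quarticV a t) (quarticW a t)
      = ((a ^ 3 - 1) ^ 2 * quarticContact a t) ^ 2 := by
  unfold dualHessian quarticU quarticV quarticW quarticContact
  ring

theorem quarticContact_sq (a t : R) :
    quarticContact a t ^ 2 = t ^ 6 * (t + 1) ^ 2 * (t ^ 2 - t + 1) ^ 2 * (a * t - 2) ^ 2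
      * ((a + 1) * t - 1) ^ 2 * ((a ^ 2 - a + 1) * t ^ 2 + (1 - 2 * a) * t + 1) ^ 2
      * (a ^ 2 * t ^ 2 + 1 - a * t) ^ 2 := by
  unfold quarticContact
  ring

end QuarticIdentity

theorem quartic_even_intersection_general {k : Type*} [Field k]
    (a t U V W Gsub prod : Polynomial (Polynomial k))
    (ha : a = C Polynomial.X)
    (hU : U = a ^ 2 * t ^ 4 - 2 * a * t ^ 3 + (a ^ 3 + 2) * t ^ 2 - 2 * a ^ 2 * t + a)
    (hV : V = a ^ 4 * t ^ 4 + (1 - 3 * a ^ 3) * t ^ 3 + 3 * a ^ 2 * t ^ 2 - 2 * a * t + 1)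
    (hW : W = a * t ^ 4 - (a ^ 3 + 1) * t ^ 3 + 3 * a ^ 2 * t ^ 2 - 2 * a * t + 1)
    (hG : Gsub = U ^ 6 + V ^ 6 + W ^ 6
        - 6 * a ^ 2 * (U ^ 4 * V * W + U * V ^ 4 * W + U * V * W ^ 4)
        + (4 * a ^ 3 - 2) * (U ^ 3 * V ^ 3 + U ^ 3 * W ^ 3 + V ^ 3 * W ^ 3)
        + (12 * a - 3 * a ^ 4) * U ^ 2 * V ^ 2 * W ^ 2)
    (hprod : prod = t ^ 6 * (t + 1) ^ 2 * (t ^ 2 - t + 1) ^ 2 * (a * t - 2) ^ 2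
        * ((a + 1) * t - 1) ^ 2
        * ((a ^ 2 - a + 1) * t ^ 2 + (1 - 2 * a) * t + 1) ^ 2
        * (a ^ 2 * t ^ 2 + 1 - a * t) ^ 2) :
    (∃ c : Polynomial k, c ≠ 0 ∧ Gsub = C c * prod) ∧
    ∃ P : Polynomial (Polynomial k), Gsub = P ^ 2 := by
  have hGsub : Gsub = ((a ^ 3 - 1) ^ 2 * quarticContact a t) ^ 2 := by
    rw [hG, hU, hV, hW]
    exact dualHessian_quartic a t
  have hprod' : prod = quarticContact a t ^ 2 := by rw [hprod, quarticContact_sq]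
  have hc : (X ^ 3 - 1 : k[X]) ^ 4 ≠ 0 :=
    pow_ne_zero 4 (by simpa using X_pow_sub_C_ne_zero (R := k) three_pos 1)
  refine ⟨⟨_, hc, ?_⟩, _, hGsub⟩
  rw [hGsub, hprod', ha]
  simp only [map_pow, map_sub, map_one]
  ring

/-- Substituting the parameterization of the rational quartic into the sextic `G`
gives, up to a nonzero constant (an element of `k[a]`), the polynomial
`t⁶(t+1)²(t²-t+1)²(at-2)²((a+1)t-1)²((a²-a+1)t²+(1-2a)t+1)²(a²t²+1-at)²`;
in particular `G(U(t),V(t),W(t))` is a square. Here we work in `k[a][t]`,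
with `a = C X` and `t = X`. -/
theorem quartic_even_intersection {k : Type*} [Field k]
    (h2 : (2 : k) ≠ 0) (h3 : (3 : k) ≠ 0)
    (a t U V W Gsub prod : Polynomial (Polynomial k))
    (ha : a = C Polynomial.X) (ht : t = Polynomial.X)
    (hU : U = a ^ 2 * t ^ 4 - 2 * a * t ^ 3 + (a ^ 3 + 2) * t ^ 2 - 2 * a ^ 2 * t + a)
    (hV : V = a ^ 4 * t ^ 4 + (1 - 3 * a ^ 3) * t ^ 3 + 3 * a ^ 2 * t ^ 2 - 2 * a * t + 1)
    (hW : W = a * t ^ 4 - (a ^ 3 + 1) * t ^ 3 + 3 * a ^ 2 * t ^ 2 - 2 * a * t + 1)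
    (hG : Gsub = U ^ 6 + V ^ 6 + W ^ 6
        - 6 * a ^ 2 * (U ^ 4 * V * W + U * V ^ 4 * W + U * V * W ^ 4)
        + (4 * a ^ 3 - 2) * (U ^ 3 * V ^ 3 + U ^ 3 * W ^ 3 + V ^ 3 * W ^ 3)
        + (12 * a - 3 * a ^ 4) * U ^ 2 * V ^ 2 * W ^ 2)
    (hprod : prod = t ^ 6 * (t + 1) ^ 2 * (t ^ 2 - t + 1) ^ 2 * (a * t - 2) ^ 2
        * ((a + 1) * t - 1) ^ 2
        * ((a ^ 2 - a + 1) * t ^ 2 + (1 - 2 * a) * t + 1) ^ 2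
        * (a ^ 2 * t ^ 2 + 1 - a * t) ^ 2) :
    (∃ c : Polynomial k, c ≠ 0 ∧ Gsub = C c * prod) ∧
    ∃ P : Polynomial (Polynomial k), Gsub = P ^ 2 :=
  quartic_even_intersection_general a t U V W Gsub prod ha hU hV hW hG hprod
end

section
/- Let k be a field of characteristic not 2 or 3, a ∈ k with a³ ≠ 1. The twisted discriminant (as defined by Δ = 81s₃²-54s₃s₁s₂-3s₁²s₂²+12s₁³s₃+12s₂³) of the monic cubic y³ - s₁y² + s₂y - s₃ with s₁ = 3at, s₂ = 3a²t², s₃ = (a³t⁶-1)/(t³+1) equals (9(1+a³t³)/(1+t³))², a square in k(a)(t). -/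
/-!
With `s₁ = 3u` and `s₂ = 3u²` (here `u = at`) the twisted discriminant collapses to
`81 (s₃ - u³)²`, and for `s₃ = (a³t⁶ - 1)/(t³ + 1)` one has `s₃ - a³t³ = -(1 + a³t³)/(1 + t³)`.
-/

section

variable {R : Type*} [CommRing R]

def twistedDiscriminant (s₁ s₂ s₃ : R) : R :=
  81 * s₃ ^ 2 - 54 * s₃ * s₁ * s₂ - 3 * s₁ ^ 2 * s₂ ^ 2 + 12 * s₁ ^ 3 * s₃ + 12 * s₂ ^ 3

theorem twistedDiscriminant_three_mul_three_mul_sq (u s : R) :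
    twistedDiscriminant (3 * u) (3 * u ^ 2) s = (9 * (s - u ^ 3)) ^ 2 := by
  unfold twistedDiscriminant
  ring

end

theorem div_sub_mul_cube_eq_neg {k : Type*} [Field k] (a t : k) (ht : t ^ 3 + 1 ≠ 0) :
    (a ^ 3 * t ^ 6 - 1) / (t ^ 3 + 1) - (a * t) ^ 3 = -((1 + a ^ 3 * t ^ 3) / (1 + t ^ 3)) := by
  rw [add_comm 1 (t ^ 3)]
  field_simp
  ring

theorem farashahi_discriminant_square_general {k : Type*} [Field k]
    (a t : k) (ht : t ^ 3 ≠ -1)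
    (s1 s2 s3 : k)
    (hs1 : s1 = 3 * a * t) (hs2 : s2 = 3 * a ^ 2 * t ^ 2)
    (hs3 : s3 = (a ^ 3 * t ^ 6 - 1) / (t ^ 3 + 1)) :
    81 * s3 ^ 2 - 54 * s3 * s1 * s2 - 3 * s1 ^ 2 * s2 ^ 2
      + 12 * s1 ^ 3 * s3 + 12 * s2 ^ 3
    = (9 * (1 + a ^ 3 * t ^ 3) / (1 + t ^ 3)) ^ 2 := by
  have hs1' : s1 = 3 * (a * t) := by rw [hs1, mul_assoc]
  have hs2' : s2 = 3 * (a * t) ^ 2 := by rw [hs2, mul_pow, mul_assoc]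
  have hden : t ^ 3 + 1 ≠ 0 := fun h => ht (eq_neg_of_add_eq_zero_left h)
  change twistedDiscriminant s1 s2 s3 = _
  rw [hs1', hs2', twistedDiscriminant_three_mul_three_mul_sq, hs3,
    div_sub_mul_cube_eq_neg a t hden, mul_neg, neg_sq, mul_div_assoc]

/-- The twisted discriminant of the cubic `y³ - s₁y² + s₂y - s₃` with `s₁ = 3at`,
`s₂ = 3a²t²`, `s₃ = (a³t⁶-1)/(t³+1)` equals `(9(1+a³t³)/(1+t³))²`, a square. -/
theorem farashahi_discriminant_square {k : Type*} [Field k]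
    (h2 : (2 : k) ≠ 0) (h3 : (3 : k) ≠ 0)
    (a t : k) (ha : a ^ 3 ≠ 1) (ht : t ^ 3 ≠ -1)
    (s1 s2 s3 : k)
    (hs1 : s1 = 3 * a * t) (hs2 : s2 = 3 * a ^ 2 * t ^ 2)
    (hs3 : s3 = (a ^ 3 * t ^ 6 - 1) / (t ^ 3 + 1)) :
    81 * s3 ^ 2 - 54 * s3 * s1 * s2 - 3 * s1 ^ 2 * s2 ^ 2
      + 12 * s1 ^ 3 * s3 + 12 * s2 ^ 3
    = (9 * (1 + a ^ 3 * t ^ 3) / (1 + t ^ 3)) ^ 2 :=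
  farashahi_discriminant_square_general a t ht s1 s2 s3 hs1 hs2 hs3
end

section
/- Let k be a field of characteristic not 2 or 3 in which every element has a cube root, with a fixed cube-root map. Let a ∈ k with a³ ≠ 1 and t ∈ k with t³ ≠ -1. Set y = at - ∛((a³t³+1)/(t³+1)) and x = -t·∛((a³t³+1)/(t³+1)). Then x³ + y³ + 1 = 3axy, i.e., the point (x:y:1) lies on the Hessian cubic X³+Y³+Z³-3aXYZ = 0. -/
-- With `x = -t c`, `y = a t - c`, the difference `x³ + y³ + 1 - 3axy` collapses to `a³t³ + 1 - c³(t³ + 1)`.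
theorem hessian_of_cube_mul_eq {R : Type*} [CommRing R] {a t c : R}
    (hc : c ^ 3 * (t ^ 3 + 1) = a ^ 3 * t ^ 3 + 1) :
    (-t * c) ^ 3 + (a * t - c) ^ 3 + 1 = 3 * a * (-t * c) * (a * t - c) := by
  linear_combination -hc

theorem farashahi_encoding_general {k : Type*} [Field k]
    (cbrt : k → k) (hcbrt : ∀ u : k, (cbrt u) ^ 3 = u)
    (a t : k) (ht : t ^ 3 ≠ -1)
    (x y : k)
    (hy : y = a * t - cbrt ((a ^ 3 * t ^ 3 + 1) / (t ^ 3 + 1)))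
    (hx : x = -t * cbrt ((a ^ 3 * t ^ 3 + 1) / (t ^ 3 + 1))) :
    x ^ 3 + y ^ 3 + 1 = 3 * a * x * y := by
  have hden : t ^ 3 + 1 ≠ 0 := fun h => ht (eq_neg_of_add_eq_zero_left h)
  subst hx hy
  apply hessian_of_cube_mul_eq
  rw [hcbrt, div_mul_cancel₀ _ hden]

/-- Farashahi's encoding: with `y = at - ∛((a³t³+1)/(t³+1))` and
`x = -t·∛((a³t³+1)/(t³+1))`, the point `(x:y:1)` lies on the Hessian cubic
`X³+Y³+Z³ = 3aXYZ`. -/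
theorem farashahi_encoding {k : Type*} [Field k]
    (h2 : (2 : k) ≠ 0) (h3 : (3 : k) ≠ 0)
    (cbrt : k → k) (hcbrt : ∀ u : k, (cbrt u) ^ 3 = u)
    (a t : k) (ha : a ^ 3 ≠ 1) (ht : t ^ 3 ≠ -1)
    (x y : k)
    (hy : y = a * t - cbrt ((a ^ 3 * t ^ 3 + 1) / (t ^ 3 + 1)))
    (hx : x = -t * cbrt ((a ^ 3 * t ^ 3 + 1) / (t ^ 3 + 1))) :
    x ^ 3 + y ^ 3 + 1 = 3 * a * x * y :=
  farashahi_encoding_general cbrt hcbrt a t ht x y hy hx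
end

section
/- Let k be a field of characteristic not 2 or 3 in which every element has a cube root, with a fixed cube-root map ∛. Let a, b ∈ k and t ∈ k, t ≠ 0. Set x = 1/(3t²) + ∛(a²t²/4 - 1/(108t⁶) - b - a/(6t²)) and y = 1/(6t³) - at/2 - x/t. Then y² = x³ + ax + b. -/
/-!
Substituting the line `y = u x + v` into `y² = x³ + a x + b` gives the cubic
`x³ - u² x² + (a - 2uv) x + b - v² = 0`. Choosing `v = (3a - u⁴)/(6u)` makes it a perfect cube,
`(x - u²/3)³ = v² - b - u⁶/27`, so a single cube root produces a point of the curve.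
The theorem is the case `u = -1/t`.
-/

/-- `hw` and `hv` are `w = u²/3` and `v = (3a - u⁴)/(6u)` with the denominators cleared. -/
theorem icart_sq_eq_cube_add {R : Type*} [CommRing R] {a b u v w x : R}
    (hw : u ^ 2 = 3 * w) (hv : 2 * u * v = a - 3 * w ^ 2)
    (hx : (x - w) ^ 3 = v ^ 2 - b - w ^ 3) :
    (u * x + v) ^ 2 = x ^ 3 + a * x + b := by
  linear_combination x ^ 2 * hw + x * hv - hx

/-- Icart's encoding: with
`x = 1/(3t²) + ∛(a²t²/4 - 1/(108t⁶) - b - a/(6t²))` and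
`y = 1/(6t³) - at/2 - x/t`, the point `(x, y)` lies on `y² = x³ + ax + b`. -/
theorem icart_encoding {k : Type*} [Field k]
    (h2 : (2 : k) ≠ 0) (h3 : (3 : k) ≠ 0)
    (cbrt : k → k) (hcbrt : ∀ u : k, (cbrt u) ^ 3 = u)
    (a b t : k) (ht : t ≠ 0)
    (x y : k)
    (hx : x = 1 / (3 * t ^ 2)
        + cbrt (a ^ 2 * t ^ 2 / 4 - 1 / (108 * t ^ 6) - b - a / (6 * t ^ 2)))
    (hy : y = 1 / (6 * t ^ 3) - a * t / 2 - x / t) :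
    y ^ 2 = x ^ 3 + a * x + b := by
  have h4 : (4 : k) ≠ 0 := by
    rw [show (4 : k) = 2 ^ 2 by norm_num]; exact pow_ne_zero _ h2
  have h6 : (6 : k) ≠ 0 := by
    rw [show (6 : k) = 2 * 3 by norm_num]; exact mul_ne_zero h2 h3
  have h108 : (108 : k) ≠ 0 := by
    rw [show (108 : k) = 2 ^ 2 * 3 ^ 3 by norm_num]
    exact mul_ne_zero (pow_ne_zero _ h2) (pow_ne_zero _ h3)
  have hy' : y = -1 / t * x + (1 / (6 * t ^ 3) - a * t / 2) := by rw [hy]; ring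
  rw [hy']
  refine icart_sq_eq_cube_add (w := 1 / (3 * t ^ 2)) ?_ ?_ ?_
  · field_simp
  · field_simp
    ring
  · rw [hx, add_sub_cancel_left, hcbrt]
    field_simp
    ring
end
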